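/- Let (V, P) be a finite irreducible Markov chain with stationary distribution π. Then for every eigenvalue λ ∈ ℂ of P (regarded as a complex matrix) with λ ≠ 1 and every natural number t, (1/2)·|λ|^t ≤ max_{x∈V} ‖P^t(x,·) − π‖_TV. -/

import Mathlib

/-!
Let `g` be an eigenvector of `P` for `λ ≠ 1`. Since `π` is a left eigenvector for the
eigenvalue `1`, it is orthogonal to `g`, so `λ^t g(x) = ∑_y (P^t(x,y) - π(y)) g(y)`.
Evaluating at a point `x` where `|g|` is maximal gives
`|λ|^t ≤ ∑_y |P^t(x,y) - π(y)| = 2 ‖P^t(x,·) - π‖_TV`.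
-/

open scoped Classical

noncomputable section

namespace Stmt10

variable {V : Type*} [Fintype V]

/-- total variation distance between two distributions on `V`. -/
def tv (σ τ : V → ℝ) : ℝ := (1 / 2) * ∑ y, |σ y - τ y|

theorem norm_le_sum_norm_of_mul_eq_sum_mul {ι 𝕜 : Type*} [Fintype ι] [NormedField 𝕜]
    {d v : ι → 𝕜} {c : 𝕜} {x : ι} (hmax : ∀ y, ‖v y‖ ≤ ‖v x‖) (hx : v x ≠ 0)
    (h : c * v x = ∑ y, d y * v y) : ‖c‖ ≤ ∑ y, ‖d y‖ := by
  refine le_of_mul_le_mul_right ?_ (norm_pos_iff.mpr hx)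
  calc ‖c‖ * ‖v x‖ = ‖∑ y, d y * v y‖ := by rw [← h, norm_mul]
    _ ≤ ∑ y, ‖d y‖ * ‖v y‖ := by
      simpa only [norm_mul] using norm_sum_le Finset.univ fun y => d y * v y
    _ ≤ (∑ y, ‖d y‖) * ‖v x‖ := by
      rw [Finset.sum_mul]
      gcongr with y
      exact hmax y

section

open Matrix

variable {n : Type*} [Fintype n] [DecidableEq n]

theorem pow_mulVec_eq_pow_smul_of_mulVec_eq_smul {R : Type*} [CommSemiring R]
    {A : Matrix n n R} {v : n → R} {c : R} (hv : A *ᵥ v = c • v) (t : ℕ) :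
    (A ^ t) *ᵥ v = c ^ t • v := by
  induction t with
  | zero => simp
  | succ t ih => rw [pow_succ', ← mulVec_mulVec, ih, mulVec_smul, hv, smul_smul, ← pow_succ]

omit [DecidableEq n] in
theorem dotProduct_eq_zero_of_vecMul_eq_self_of_mulVec_eq_smul {R : Type*} [CommRing R]
    [NoZeroDivisors R] {A : Matrix n n R} {p v : n → R} {c : R}
    (hp : p ᵥ* A = p) (hv : A *ᵥ v = c • v) (hc : c ≠ 1) : p ⬝ᵥ v = 0 := by
  have h : (c - 1) * (p ⬝ᵥ v) = 0 := by
    rw [sub_mul, one_mul, ← smul_eq_mul, ← dotProduct_smul, ← hv, dotProduct_mulVec, hp,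
      sub_self]
  exact (mul_eq_zero.mp h).resolve_left (sub_ne_zero.mpr hc)

theorem exists_norm_pow_le_sum_norm_pow_apply_sub {𝕜 : Type*} [NormedField 𝕜]
    {A : Matrix n n 𝕜} {p v : n → 𝕜} {c : 𝕜}
    (hp : p ᵥ* A = p) (hv : A *ᵥ v = c • v) (hv0 : v ≠ 0) (hc : c ≠ 1) (t : ℕ) :
    ∃ x, ‖c‖ ^ t ≤ ∑ y, ‖(A ^ t) x y - p y‖ := by
  obtain ⟨z, hz⟩ := Function.ne_iff.mp hv0
  have : Nonempty n := ⟨z⟩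
  obtain ⟨x, hmax⟩ := Finite.exists_max fun y => ‖v y‖
  have hx : v x ≠ 0 := norm_pos_iff.mp ((norm_pos_iff.mpr hz).trans_le (hmax z))
  have horth : ∑ y, p y * v y = 0 :=
    dotProduct_eq_zero_of_vecMul_eq_self_of_mulVec_eq_smul hp hv hc
  have hkey : c ^ t * v x = ∑ y, ((A ^ t) x y - p y) * v y := by
    have hrow := congrFun (pow_mulVec_eq_pow_smul_of_mulVec_eq_smul hv t) x
    simpa [sub_mul, Finset.sum_sub_distrib, horth, mulVec, dotProduct] using hrow.symm
  exact ⟨x, norm_pow c t ▸ norm_le_sum_norm_of_mul_eq_sum_mul hmax hx hkey⟩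

end

theorem stmt10_general {V : Type*} [Fintype V] [Nonempty V] (P : V → V → ℝ) (pi : V → ℝ)
    (hstat : ∀ y, ∑ x, pi x * P x y = pi y)
    (lam : ℂ) (hlam : lam ≠ 1)
    (hev : ∃ g : V → ℂ, g ≠ 0 ∧ ∀ x, ∑ y, (P x y : ℂ) * g y = lam * g x)
    (t : ℕ) :
    (1 / 2) * ‖lam‖ ^ t ≤
      Finset.univ.sup' Finset.univ_nonempty fun x =>
        tv (fun y => (Matrix.of P ^ t) x y) pi := by
  obtain ⟨g, hg0, hg⟩ := hev
  let A : Matrix V V ℂ := Complex.ofRealHom.mapMatrix (Matrix.of P)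
  have hA : A.mulVec g = lam • g := funext fun x => by
    simpa [A, Matrix.mulVec, dotProduct] using hg x
  have hpi : Matrix.vecMul (fun x => (pi x : ℂ)) A = fun x => (pi x : ℂ) := funext fun y => by
    simpa [A, Matrix.vecMul, dotProduct] using congrArg Complex.ofReal (hstat y)
  obtain ⟨x, hx⟩ := exists_norm_pow_le_sum_norm_pow_apply_sub hpi hA hg0 hlam t
  rw [← map_pow] at hx
  simp only [RingHom.mapMatrix_apply, Matrix.map_apply, Complex.ofRealHom_eq_coe,
    ← Complex.ofReal_sub, Complex.norm_real, Real.norm_eq_abs] at hx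
  refine le_trans ?_ (Finset.le_sup' _ (Finset.mem_univ x))
  unfold tv
  linarith

/-- Lower bound on mixing: for a finite irreducible Markov chain, every complex
eigenvalue `λ ≠ 1` satisfies `(1/2)|λ|^t ≤ max_x ‖P^t(x,·) − π‖_TV`. -/
theorem stmt10 {V : Type*} [Fintype V] [Nonempty V] (P : V → V → ℝ) (pi : V → ℝ)
    (hP0 : ∀ x y, 0 ≤ P x y) (hP1 : ∀ x, ∑ y, P x y = 1)
    (hirr : ∀ x y : V, ∃ t : ℕ, 0 < (Matrix.of P ^ t) x y)
    (hpi0 : ∀ x, 0 < pi x) (hpi1 : ∑ x, pi x = 1)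
    (hstat : ∀ y, ∑ x, pi x * P x y = pi y)
    (lam : ℂ) (hlam : lam ≠ 1)
    (hev : ∃ g : V → ℂ, g ≠ 0 ∧ ∀ x, ∑ y, (P x y : ℂ) * g y = lam * g x)
    (t : ℕ) :
    (1 / 2) * ‖lam‖ ^ t ≤
      Finset.univ.sup' Finset.univ_nonempty fun x =>
        tv (fun y => (Matrix.of P ^ t) x y) pi :=
  stmt10_general P pi hstat lam hlam hev t

end Stmt10
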